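/- There exists a constant s > 0 such that for every integer n ≥ 2 and every n-Fekete set F_n for the Ginibre potential Q(z) = |z|², any two distinct points z, w ∈ F_n satisfy |z − w| > s/√n (that is, the family of Ginibre Fekete sets is uniformly separated). -/

import Mathlib

/-- Weighted Vandermonde determinant for the Ginibre potential `Q(z) = |z|²`. -/
noncomputable def vand (n : ℕ) (z : Fin n → ℂ) : ℝ :=
  (∏ i : Fin n, ∏ j ∈ Finset.univ.filter (fun j => i < j), ‖z i - z j‖ ^ 2) *
    Real.exp (-(n : ℝ) * ∑ j : Fin n, ‖z j‖ ^ 2)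

/-- `F` is an `n`-Fekete set for the Ginibre potential: `F` consists of `n`
distinct points maximizing the weighted Vandermonde determinant over `ℂⁿ`. -/
def IsFeketeGinibre (n : ℕ) (F : Finset ℂ) : Prop :=
  ∃ z : Fin n → ℂ, Function.Injective z ∧ Finset.image z Finset.univ = F ∧
    ∀ w : Fin n → ℂ, vand n w ≤ vand n z

/-!
Let `z` be a Fekete configuration and `a = z i`, `b = z j` two of its points. Moving only the
`i`-th point, maximality says that `ζ ↦ ∏_{k ≠ i} |ζ - z k| e^{-n|ζ|²/2}` is maximal at `a`.
Completing the square, this function is `|ζ - b| |f ζ| e^{-n|ζ - a|²/2}` for an entire `f` with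
`f a ≠ 0`. On the circle `|ζ - a| = r := 1/√n` the factor `|ζ - b|` is at least `r - |a - b|`, so
the maximum modulus principle for `f` at the centre `a` gives `r - |a - b| ≤ |a - b| e^{1/2}`,
i.e. `|a - b| ≥ 1 / ((1 + √e) √n) > 1 / (3 √n)`.
-/

open Finset Function

theorem prod_prod_compl_eq_sq_mul {α M : Type*} [Fintype α] [DecidableEq α] [CommMonoid M]
    (f : α → α → M) (hf : ∀ a b, f a b = f b a) (i : α) :
    ∏ a, ∏ b ∈ {a}ᶜ, f a b =
      (∏ b ∈ {i}ᶜ, f i b) ^ 2 * ∏ a ∈ {i}ᶜ, ∏ b ∈ ({a}ᶜ : Finset α).erase i, f a b := by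
  have hsplit : ∀ a ∈ ({i}ᶜ : Finset α),
      ∏ b ∈ {a}ᶜ, f a b = f i a * ∏ b ∈ ({a}ᶜ : Finset α).erase i, f a b := fun a ha => by
    rw [hf, mul_prod_erase _ _ (by simpa [eq_comm] using ha)]
  rw [Fintype.prod_eq_mul_prod_compl i, prod_congr rfl hsplit, prod_mul_distrib, sq, mul_assoc]

theorem Real.exp_neg_mul_norm_sq_eq_norm_cexp_mul (c : ℝ) (a ζ : ℂ) :
    Real.exp (-c * ‖ζ‖ ^ 2) =
      ‖Complex.exp (c * (Complex.normSq a - 2 * (starRingEnd ℂ) a * ζ))‖ *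
        Real.exp (-c * ‖ζ - a‖ ^ 2) := by
  rw [Complex.norm_exp, ← Real.exp_add]
  congr 1
  simp only [Complex.sq_norm, Complex.normSq_sub, Complex.mul_re, Complex.sub_re,
    Complex.ofReal_re, Complex.ofReal_im, Complex.mul_im, Complex.sub_im, Complex.conj_re,
    Complex.conj_im, Complex.re_ofNat, Complex.im_ofNat]
  ring

theorem le_norm_sub_mul_one_add_exp {f : ℂ → ℂ} (hf : Differentiable ℂ f) {a b : ℂ}
    (ha : f a ≠ 0) (c : ℝ)
    (hmax : ∀ ζ, ‖ζ - b‖ * ‖f ζ‖ * Real.exp (-c * ‖ζ - a‖ ^ 2) ≤ ‖a - b‖ * ‖f a‖)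
    {r : ℝ} (hr : 0 < r) : r ≤ ‖a - b‖ * (1 + Real.exp (c * r ^ 2)) := by
  set d := ‖a - b‖
  rcases le_or_gt r d with hrd | hdr
  · nlinarith [Real.exp_pos (c * r ^ 2), norm_nonneg (a - b)]
  have hsphere : ∀ ζ ∈ frontier (Metric.ball a r),
      ‖f ζ‖ ≤ d * ‖f a‖ * Real.exp (c * r ^ 2) / (r - d) := by
    intro ζ hζ
    rw [frontier_ball a hr.ne', mem_sphere_iff_norm] at hζ
    have hζb : r - d ≤ ‖ζ - b‖ := by
      have := norm_sub_le_norm_sub_add_norm_sub ζ b a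
      rw [norm_sub_rev b a] at this
      linarith
    have h := hmax ζ
    rw [hζ, neg_mul, Real.exp_neg, ← div_eq_mul_inv, div_le_iff₀ (Real.exp_pos _)] at h
    rw [le_div_iff₀ (sub_pos.mpr hdr)]
    nlinarith [norm_nonneg (f ζ)]
  have hcenter := Complex.norm_le_of_forall_mem_frontier_norm_le Metric.isBounded_ball
    hf.diffContOnCl hsphere (subset_closure (Metric.mem_ball_self hr))
  rw [le_div_iff₀ (sub_pos.mpr hdr)] at hcenter
  have hfa : 0 < ‖f a‖ := norm_pos_iff.mpr ha
  nlinarith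

theorem Real.exp_one_half_lt_two : Real.exp (1 / 2) < 2 := by
  have hsq : Real.exp (1 / 2) ^ 2 = Real.exp 1 := by rw [← Real.exp_nat_mul]; norm_num
  nlinarith [Real.exp_one_lt_d9, Real.exp_pos (1 / 2)]

theorem vand_eq_prod_prod_compl (n : ℕ) (w : Fin n → ℂ) :
    vand n w = (∏ a, ∏ b ∈ {a}ᶜ, ‖w a - w b‖) * Real.exp (-(n : ℝ) * ∑ a, ‖w a‖ ^ 2) := by
  rw [vand, ← prod_prod_Ioi_mul_eq_prod_prod_off_diag (fun a b => ‖w b - w a‖)]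
  simp only [filter_lt_eq_Ioi, norm_sub_rev (w _) (w _), sq]

noncomputable def vandSlice (n : ℕ) (z : Fin n → ℂ) (i : Fin n) (ζ : ℂ) : ℝ :=
  (∏ j ∈ {i}ᶜ, ‖ζ - z j‖) * Real.exp (-(n / 2 : ℝ) * ‖ζ‖ ^ 2)

section Fekete

variable {n : ℕ} {z : Fin n → ℂ}

theorem exists_pos_vand_update_eq (hz : Injective z) (i : Fin n) :
    ∃ C > 0, ∀ ζ, vand n (update z i ζ) = vandSlice n z i ζ ^ 2 * C := by
  refine ⟨(∏ a ∈ {i}ᶜ, ∏ b ∈ ({a}ᶜ : Finset (Fin n)).erase i, ‖z a - z b‖) *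
      Real.exp (-(n : ℝ) * ∑ a ∈ {i}ᶜ, ‖z a‖ ^ 2), ?_, fun ζ => ?_⟩
  · refine mul_pos (prod_pos fun a _ => prod_pos fun b hb => ?_) (Real.exp_pos _)
    have hba : b ≠ a := by simpa using (mem_erase.mp hb).2
    exact norm_pos_iff.mpr (sub_ne_zero.mpr (hz.ne hba.symm))
  have hupd : ∀ a ∈ ({i}ᶜ : Finset (Fin n)), update z i ζ a = z a :=
    fun a ha => update_of_ne (by simpa using ha) ζ z
  rw [vand_eq_prod_prod_compl,
    prod_prod_compl_eq_sq_mul (fun a b => ‖update z i ζ a - update z i ζ b‖)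
      (fun a b => norm_sub_rev _ _) i,
    Fintype.sum_eq_add_sum_compl i, vandSlice]
  simp only [update_self]
  rw [prod_congr rfl fun b hb => by rw [hupd b hb], sum_congr rfl fun a ha => by rw [hupd a ha],
    prod_congr rfl fun a ha => prod_congr rfl fun b hb => by
      rw [hupd a ha, hupd b (by simpa using (mem_erase.mp hb).1)]]
  rw [mul_add, Real.exp_add, mul_pow, ← Real.exp_nat_mul]
  ring_nf

theorem vandSlice_le_of_forall_vand_le (hz : Injective z) (hmax : ∀ w, vand n w ≤ vand n z)
    (i : Fin n) (ζ : ℂ) : vandSlice n z i ζ ≤ vandSlice n z i (z i) := by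
  obtain ⟨C, hC, hvand⟩ := exists_pos_vand_update_eq hz i
  have hvand_self : vand n z = vandSlice n z i (z i) ^ 2 * C := by
    rw [← hvand, update_eq_self]
  have h := hmax (update z i ζ)
  rw [hvand, hvand_self] at h
  have hnonneg : ∀ ζ, 0 ≤ vandSlice n z i ζ := fun ζ => by unfold vandSlice; positivity
  exact (pow_le_pow_iff_left₀ (hnonneg _) (hnonneg _) two_ne_zero).mp
    (le_of_mul_le_mul_right h hC)

theorem exists_differentiable_vandSlice_eq (hz : Injective z) {i j : Fin n} (hji : j ≠ i) :
    ∃ f : ℂ → ℂ, Differentiable ℂ f ∧ f (z i) ≠ 0 ∧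
      ∀ ζ, vandSlice n z i ζ = ‖ζ - z j‖ * ‖f ζ‖ * Real.exp (-(n / 2 : ℝ) * ‖ζ - z i‖ ^ 2) := by
  have hj : j ∈ ({i}ᶜ : Finset (Fin n)) := by simpa using hji
  refine ⟨fun ζ => (∏ k ∈ ({i}ᶜ : Finset (Fin n)).erase j, (ζ - z k)) *
    Complex.exp ((n / 2 : ℝ) * (Complex.normSq (z i) - 2 * (starRingEnd ℂ) (z i) * ζ)),
    by fun_prop, ?_, fun ζ => ?_⟩
  · refine mul_ne_zero (prod_ne_zero_iff.mpr fun k hk => sub_ne_zero.mpr (hz.ne ?_))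
      (Complex.exp_ne_zero _)
    simpa [eq_comm] using (mem_erase.mp hk).2
  · rw [vandSlice, Real.exp_neg_mul_norm_sq_eq_norm_cexp_mul _ (z i), ← mul_prod_erase _ _ hj,
      norm_mul, norm_prod]
    ring

theorem inv_sqrt_le_norm_sub_mul_of_forall_vand_le (hz : Injective z)
    (hmax : ∀ w, vand n w ≤ vand n z) {i j : Fin n} (hji : j ≠ i) :
    (Real.sqrt n)⁻¹ ≤ ‖z i - z j‖ * (1 + Real.exp (1 / 2)) := by
  obtain ⟨f, hf, hfi, hslice⟩ := exists_differentiable_vandSlice_eq hz hji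
  have hn : (0 : ℝ) < n := Nat.cast_pos.mpr i.pos
  have hexponent : (n / 2 : ℝ) * (Real.sqrt n)⁻¹ ^ 2 = 1 / 2 := by
    rw [inv_pow, Real.sq_sqrt hn.le]
    field_simp
  rw [← hexponent]
  exact le_norm_sub_mul_one_add_exp hf hfi (n / 2)
    (fun ζ => by simpa [hslice] using vandSlice_le_of_forall_vand_le hz hmax i ζ)
    (inv_pos.mpr (Real.sqrt_pos.mpr hn))

end Fekete

theorem fekete_ginibre_uniformly_separated :
    ∃ s : ℝ, 0 < s ∧ ∀ n : ℕ, 2 ≤ n → ∀ F : Finset ℂ, IsFeketeGinibre n F →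
      ∀ z ∈ F, ∀ w ∈ F, z ≠ w → s / Real.sqrt n < ‖z - w‖ := by
  refine ⟨1 / 3, by norm_num, ?_⟩
  rintro n - F ⟨z, hz, rfl, hmax⟩ _ hp _ hq hpq
  obtain ⟨i, -, rfl⟩ := mem_image.mp hp
  obtain ⟨j, -, rfl⟩ := mem_image.mp hq
  have hsep := inv_sqrt_le_norm_sub_mul_of_forall_vand_le hz hmax (i := i) (j := j)
    (by rintro rfl; exact hpq rfl)
  have hsqrt : 0 < Real.sqrt n := Real.sqrt_pos.mpr (Nat.cast_pos.mpr i.pos)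
  have hd : 0 < ‖z i - z j‖ * Real.sqrt n :=
    mul_pos (norm_pos_iff.mpr (sub_ne_zero.mpr hpq)) hsqrt
  rw [inv_le_iff_one_le_mul₀ hsqrt] at hsep
  rw [div_lt_iff₀ hsqrt]
  nlinarith [mul_lt_mul_of_pos_left Real.exp_one_half_lt_two hd]
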